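/- Let D be a completely metrizable locally convex topological vector space and let φ : ℝ≥0 ⇉ D be an upper hemicontinuous correspondence with convex and compact values such that the closed convex hull of φ([t, t+1]) is compact. Then for every t ∈ ℝ≥0 and every sequence (aₙ) ⊆ (0,1] with aₙ → 0, the intersection over m of the closed convex hulls of φ([t, t+aₘ]) is contained in φ(t). -/

import Mathlib

/-! A point `x ∉ φ t` is strictly separated from the compact convex set `φ t` by an open
half-space `U ⊇ φ t` whose closure misses `x` (Hahn–Banach). By upper hemicontinuity `φ s ⊆ U`
for all `s ∈ [t, t + aₘ]` once `m` is large, so the closed convex hull of `φ([t, t + aₘ])` lies in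
the closure of `U` and misses `x`. -/

open scoped NNReal Topology
open Set Filter

def UpperHemicontinuousCorr {E D : Type*} [TopologicalSpace E] [TopologicalSpace D]
    (φ : E → Set D) : Prop :=
  ∀ x : E, ∀ U : Set D, IsOpen U → φ x ⊆ U → ∀ᶠ y in nhds x, φ y ⊆ U

theorem Convex.exists_isOpen_convex_superset_notMem_closure {E : Type*} [AddCommGroup E]
    [Module ℝ E] [TopologicalSpace E] [IsTopologicalAddGroup E] [ContinuousSMul ℝ E]
    [LocallyConvexSpace ℝ E] [T1Space E] {K : Set E} (hKconv : Convex ℝ K) (hKcpt : IsCompact K)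
    {x : E} (hx : x ∉ K) : ∃ U : Set E, IsOpen U ∧ Convex ℝ U ∧ K ⊆ U ∧ x ∉ closure U := by
  obtain ⟨f, u, v, hKu, huv, hvx⟩ := geometric_hahn_banach_compact_closed hKconv hKcpt
    (convex_singleton x) isClosed_singleton (disjoint_singleton_right.2 hx)
  refine ⟨f ⁻¹' Iio u, isOpen_Iio.preimage f.continuous,
    (convex_Iio u).linear_preimage (f : E →ₗ[ℝ] ℝ), hKu, fun hxU => ?_⟩
  have hfx : f x ≤ u :=
    closure_minimal (fun y (hy : f y < u) => hy.le) (isClosed_Iic.preimage f.continuous) hxU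
  linarith [hvx x rfl]

theorem UpperHemicontinuousCorr.eventually_biUnion_Icc_subset {D : Type*} [TopologicalSpace D]
    {φ : ℝ≥0 → Set D} (hφ : UpperHemicontinuousCorr φ) (t : ℝ≥0) {U : Set D} (hU : IsOpen U)
    (htU : φ t ⊆ U) : ∀ᶠ δ in 𝓝 0, ⋃ s ∈ Icc t (t + δ), φ s ⊆ U := by
  have hIcc : Tendsto (fun δ : ℝ≥0 => Icc t (t + δ)) (𝓝 0) (𝓝 t).smallSets := by
    refine tendsto_const_nhds.Icc ?_
    simpa using (tendsto_const_nhds (x := t)).add (tendsto_id (x := 𝓝 (0 : ℝ≥0)))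
  filter_upwards [hIcc.eventually (hφ t U hU htU).smallSets] with δ hδ
  exact iUnion₂_subset hδ

theorem stmt3_general {D : Type*} [AddCommGroup D] [Module ℝ D] [UniformSpace D]
    [IsUniformAddGroup D] [ContinuousSMul ℝ D] [LocallyConvexSpace ℝ D]
    [TopologicalSpace.MetrizableSpace D]
    (φ : ℝ≥0 → Set D)
    (hUHC : UpperHemicontinuousCorr φ)
    (hconv : ∀ t, Convex ℝ (φ t)) (hcpt : ∀ t, IsCompact (φ t))
    (t : ℝ≥0) (a : ℕ → ℝ≥0)
    (hlim : Filter.Tendsto a Filter.atTop (nhds 0)) :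
    (⋂ m : ℕ, closure (convexHull ℝ (⋃ s ∈ Set.Icc t (t + a m), φ s))) ⊆ φ t := by
  intro x hx
  by_contra hxt
  obtain ⟨U, hUopen, hUconv, htU, hxU⟩ :=
    (hconv t).exists_isOpen_convex_superset_notMem_closure (hcpt t) hxt
  obtain ⟨m, hm⟩ := (hlim.eventually (hUHC.eventually_biUnion_Icc_subset t hUopen htU)).exists
  exact hxU (closure_mono (convexHull_min hm hUconv) (mem_iInter.1 hx m))

theorem stmt3 {D : Type*} [AddCommGroup D] [Module ℝ D] [UniformSpace D]
    [IsUniformAddGroup D] [ContinuousSMul ℝ D] [LocallyConvexSpace ℝ D]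
    [TopologicalSpace.MetrizableSpace D] [CompleteSpace D]
    (φ : ℝ≥0 → Set D)
    (hUHC : UpperHemicontinuousCorr φ)
    (hconv : ∀ t, Convex ℝ (φ t)) (hcpt : ∀ t, IsCompact (φ t))
    (hch : ∀ t : ℝ≥0, IsCompact (closure (convexHull ℝ (⋃ s ∈ Set.Icc t (t + 1), φ s))))
    (t : ℝ≥0) (a : ℕ → ℝ≥0) (ha : ∀ n, a n ∈ Set.Ioc 0 1)
    (hlim : Filter.Tendsto a Filter.atTop (nhds 0)) :
    (⋂ m : ℕ, closure (convexHull ℝ (⋃ s ∈ Set.Icc t (t + a m), φ s))) ⊆ φ t :=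
  stmt3_general φ hUHC hconv hcpt t a hlim
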